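/- arXiv:2605.16998 — 5 statements merged into one kernel-verified Lean document; each statement's English description precedes it below -/
import Mathlib

section
/- Let G be a finite abelian group and U a unitary operator on the Hilbert space with orthonormal basis {|g⟩ : g ∈ G}. Suppose that for every subgroup V ≤ G, every shift c ∈ G, and every x ∈ G, the measurement probability |⟨x|U|c+V⟩|² equals |⟨x|U|V⟩|², where |c+V⟩ denotes the normalized uniform superposition over the coset c+V. Then every matrix entry of U has modulus 1/√|G|, i.e. |⟨x|U|y⟩| = 1/√|G| for all x, y ∈ G. -/
/-!
For the trivial subgroup `V = ⊥` the coset states are basis states, so shift invariance says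
that `|⟨x|U|c⟩|` does not depend on `c`: every row of `U` has constant modulus. A row of a
unitary matrix is a unit vector, so each of its `|G|` entries has modulus `1/√|G|`.
-/

theorem AddSubgroup.sum_indicator_bot {G M : Type*} [AddGroup G] [Fintype G] [AddCommMonoid M]
    (f : G → M) : ∑ g : G, ((⊥ : AddSubgroup G) : Set G).indicator f g = f 0 := by
  classical
  simp [AddSubgroup.coe_bot, Set.indicator_singleton]

theorem Matrix.sum_norm_sq_row_of_mem_unitaryGroup {n 𝕜 : Type*} [RCLike 𝕜] [Fintype n]
    [DecidableEq n] {U : Matrix n n 𝕜} (hU : U ∈ Matrix.unitaryGroup n 𝕜) (i : n) :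
    ∑ j, ‖U i j‖ ^ 2 = 1 := by
  have h := congrFun (congrFun (Matrix.mem_unitaryGroup_iff.mp hU) i) i
  simp only [Matrix.mul_apply, Matrix.star_apply, ← starRingEnd_apply, RCLike.mul_conj,
    Matrix.one_apply_eq] at h
  exact_mod_cast h

theorem eq_one_div_sqrt_card_of_const_of_sum_sq_eq_one {ι : Type*} [Fintype ι] {a : ι → ℝ}
    (ha : ∀ i, 0 ≤ a i) (hconst : ∀ i j, a i = a j) (hsum : ∑ i, a i ^ 2 = 1) (i : ι) :
    a i = 1 / √(Fintype.card ι) := by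
  have hcard : (Fintype.card ι : ℝ) * a i ^ 2 = 1 := by
    rw [← hsum, Finset.sum_congr rfl fun j _ => by rw [hconst j i], Finset.sum_const,
      Finset.card_univ, nsmul_eq_mul]
  have hpos : (0 : ℝ) < Fintype.card ι := by
    have := Fintype.card_pos_iff.mpr ⟨i⟩
    positivity
  refine (pow_left_inj₀ (ha i) (by positivity) two_ne_zero).mp ?_
  rw [div_pow, Real.sq_sqrt hpos.le, eq_div_iff hpos.ne']
  linarith

/-- Shift invariance of the output distribution (over all subgroups, shifts and
outcomes) forces every matrix entry of the unitary `U` to have modulus `1/√|G|`. -/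
theorem shift_invariance_forces_flat_entries
    {G : Type*} [AddCommGroup G] [Fintype G] [DecidableEq G]
    (U : Matrix G G ℂ) (hU : U ∈ Matrix.unitaryGroup G ℂ)
    (hinv : ∀ (V : AddSubgroup G) (c x : G),
      ‖(Real.sqrt (Nat.card V) : ℂ)⁻¹ *
        ∑ g : G, Set.indicator (V : Set G) (fun v => U x (c + v)) g‖ ^ 2
      =
      ‖(Real.sqrt (Nat.card V) : ℂ)⁻¹ *
        ∑ g : G, Set.indicator (V : Set G) (fun v => U x v) g‖ ^ 2) :
    ∀ x y : G, ‖U x y‖ = 1 / Real.sqrt (Fintype.card G) := by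
  intro x
  have hrow_flat : ∀ c d : G, ‖U x c‖ = ‖U x d‖ := by
    have hbasis : ∀ c : G, ‖U x c‖ ^ 2 = ‖U x 0‖ ^ 2 := fun c => by
      simpa [AddSubgroup.sum_indicator_bot] using hinv ⊥ c x
    intro c d
    rw [← sq_eq_sq₀ (norm_nonneg _) (norm_nonneg _), hbasis c, hbasis d]
  exact eq_one_div_sqrt_card_of_const_of_sum_sq_eq_one (fun _ => norm_nonneg _) hrow_flat
    (Matrix.sum_norm_sq_row_of_mem_unitaryGroup hU x)
end

section
/- Let n ≥ 0, 0 ≤ p ≤ n, and let V = {q·2^p : 0 ≤ q < 2^{n−p}} ≤ ℤ_{2^n}, with c an element whose n-bit binary representation has zeros in the first n−p bits. Then applying the n-fold tensor product of Hadamard gates to the normalized coset state gives H^{⊗n}|c+V⟩ = (1/√{2^p}) Σ_{k∈{0,1}^p} (−1)^{k·c'} |0⟩^{⊗(n−p)}|k⟩, where c' denotes the last p bits of c. In particular, the squared amplitudes are independent of c: the probability of measuring a bitstring is 2^{−p} if its first n−p bits are all zero, and 0 otherwise. -/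
/-- The single-qubit Hadamard gate: `⟨a|H|b⟩`, so that
`H|b⟩ = (1/√2)(|0⟩ + (−1)^b |1⟩)`. -/
noncomputable def Hgate (a b : Bool) : ℂ :=
  (Real.sqrt 2 : ℂ)⁻¹ * (if a && b then -1 else 1)

/-! The coset indicator is a product of single-qubit constraints, so the sum over `y` factorises
into single-qubit sums. On each of the first `n - p` qubits `y i` is free and
`∑ b, ⟨k i|H|b⟩` is `√2` or `0` according as `k i` is `0` or `1`; on the last `p` qubits
`y i = c i` is forced and the factor is `⟨k i|H|c i⟩ = ±1/√2`. The normalisations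
`2^{-(n-p)/2} · 2^{(n-p)/2} · 2^{-p/2}` combine to `2^{-p/2}`. -/

open Finset

-- The instance for the `∀` is a separate binder so that the lemma rewrites whichever
-- decidability instance the goal carries.
theorem Fintype.sum_prod_mul_ite_forall {ι β R : Type*} [Fintype ι] [DecidableEq ι] [Fintype β]
    [CommSemiring R] (f : ι → β → R) (P : ι → β → Prop) [∀ i b, Decidable (P i b)]
    [∀ y : ι → β, Decidable (∀ i, P i (y i))] (v : R) :
    ∑ y : ι → β, (∏ i, f i (y i)) * (if ∀ i, P i (y i) then v else 0)
      = v * ∏ i, ∑ b, if P i b then f i b else 0 := by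
  rw [Fintype.prod_sum, mul_sum]
  refine Finset.sum_congr rfl fun y _ => ?_
  rw [Fintype.prod_ite_zero]
  split_ifs <;> ring

theorem Real.sqrt_pow {x : ℝ} (hx : 0 ≤ x) (q : ℕ) : √(x ^ q) = √x ^ q := by
  rw [← Real.sqrt_sq (by positivity : 0 ≤ √x ^ q), ← pow_mul, mul_comm, pow_mul,
    Real.sq_sqrt hx]

theorem inv_sqrt_two_sq_mul_two : (√2 : ℂ)⁻¹ ^ 2 * 2 = 1 := by
  rw [inv_pow, ← Complex.ofReal_pow, Real.sq_sqrt zero_le_two]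
  norm_num

theorem sum_Hgate (a : Bool) : ∑ b, Hgate a b = if a then 0 else (√2 : ℂ)⁻¹ * 2 := by
  cases a <;> simp [Hgate]; ring

theorem sum_Hgate_mul_ite_suffix (n m : ℕ) (c k : Fin n → Bool) (v : ℂ) :
    ∑ y : Fin n → Bool, (∏ i, Hgate (k i) (y i)) *
        (if ∀ i : Fin n, m ≤ i.val → y i = c i then v else 0)
      = v * ∏ i : Fin n, if i.val < m then ∑ b, Hgate (k i) b else Hgate (k i) (c i) := by
  rw [Fintype.sum_prod_mul_ite_forall (fun i => Hgate (k i)) (fun i b => m ≤ i.val → b = c i)]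
  congr 1
  refine prod_congr rfl fun i _ => ?_
  by_cases hi : i.val < m
  · simp [hi]
  · simp [hi, not_lt.mp hi]

theorem prod_Hgate_factors_of_prefix_false (n m : ℕ) (hm : m ≤ n) (c k : Fin n → Bool)
    (hk : ∀ i : Fin n, i.val < m → k i = false) :
    (∏ i : Fin n, if i.val < m then ∑ b, Hgate (k i) b else Hgate (k i) (c i))
      = (√2 : ℂ)⁻¹ ^ n * (2 ^ m * (-1) ^ #{i | k i && c i}) := by
  have factor (i : Fin n) :
      (if i.val < m then ∑ b, Hgate (k i) b else Hgate (k i) (c i))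
        = (√2 : ℂ)⁻¹ * ((if i.val < m then 2 else 1) * (if k i && c i then -1 else 1)) := by
    by_cases hi : i.val < m
    · rw [if_pos hi, sum_Hgate, hk i hi]
      simp [hi]
    · simp [hi, Hgate]
  simp only [factor, prod_mul_distrib, prod_const, card_univ, Fintype.card_fin, ← prod_filter,
    Fin.card_filter_val_lt, min_eq_right hm]

theorem hadamard_coset_amplitude (n p : ℕ) (hp : p ≤ n) (c k : Fin n → Bool) :
    ∑ y : Fin n → Bool, (∏ i, Hgate (k i) (y i)) *
        (if ∀ i : Fin n, n - p ≤ i.val → y i = c i then ((√(2 ^ (n - p)) : ℝ) : ℂ)⁻¹ else 0)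
      = if ∀ i : Fin n, i.val < n - p → k i = false
          then ((√(2 ^ p) : ℝ) : ℂ)⁻¹ * (-1) ^ #{i | k i && c i} else 0 := by
  rw [sum_Hgate_mul_ite_suffix]
  split_ifs with hk
  · rw [prod_Hgate_factors_of_prefix_false n (n - p) (Nat.sub_le n p) c k hk]
    simp only [Real.sqrt_pow zero_le_two, Complex.ofReal_pow, ← inv_pow]
    rw [← pow_sub_mul_pow _ hp]
    set x : ℂ := (√2 : ℂ)⁻¹
    calc x ^ (n - p) * (x ^ (n - p) * x ^ p * (2 ^ (n - p) * (-1) ^ #{i | k i && c i}))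
        = (x ^ 2 * 2) ^ (n - p) * (x ^ p * (-1) ^ #{i | k i && c i}) := by ring
      _ = x ^ p * (-1) ^ #{i | k i && c i} := by rw [inv_sqrt_two_sq_mul_two, one_pow, one_mul]
  · push Not at hk
    obtain ⟨i, hi, hki⟩ := hk
    rw [prod_eq_zero (mem_univ i) (by rw [if_pos hi, sum_Hgate, if_pos (by simpa using hki)]),
      mul_zero]

theorem norm_inv_sqrt_two_pow_mul_neg_one_pow_sq (p j : ℕ) :
    ‖((√(2 ^ p) : ℝ) : ℂ)⁻¹ * (-1) ^ j‖ ^ 2 = ((2 : ℝ) ^ p)⁻¹ := by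
  rw [norm_mul, norm_pow, norm_neg, norm_one, one_pow, mul_one, norm_inv, Complex.norm_real,
    Real.norm_of_nonneg (Real.sqrt_nonneg _), inv_pow, Real.sq_sqrt (by positivity)]

theorem hp0_hadamard_on_coset_state_general (n p : ℕ) (hp : p ≤ n)
    (c : Fin n → Bool)
    (k : Fin n → Bool) :
    (∑ y : Fin n → Bool,
        (∏ i : Fin n, Hgate (k i) (y i)) *
          (if ∀ i : Fin n, n - p ≤ i.val → y i = c i
            then ((Real.sqrt (2 ^ (n - p)) : ℂ))⁻¹ else 0))
      = (if ∀ i : Fin n, i.val < n - p → k i = false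
          then (Real.sqrt (2 ^ p) : ℂ)⁻¹ *
            (-1 : ℂ) ^ (Finset.univ.filter fun i : Fin n => k i && c i).card
          else 0) ∧
    ‖(∑ y : Fin n → Bool,
        (∏ i : Fin n, Hgate (k i) (y i)) *
          (if ∀ i : Fin n, n - p ≤ i.val → y i = c i
            then ((Real.sqrt (2 ^ (n - p)) : ℂ))⁻¹ else 0))‖ ^ 2
      = (if ∀ i : Fin n, i.val < n - p → k i = false
          then ((2 : ℝ) ^ p)⁻¹ else 0) := by
  have amplitude := hadamard_coset_amplitude n p hp c k
  refine ⟨amplitude, ?_⟩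
  rw [amplitude]
  split_ifs
  · exact norm_inv_sqrt_two_pow_mul_neg_one_pow_sq p _
  · simp

/-- `H^{⊗n}` applied to the coset state of `V = ⟨2^p⟩ ≤ ℤ_{2^n}` shifted by `c`
(whose first `n−p` bits vanish): the amplitude on a bitstring `k` is
`(1/√{2^p})(−1)^{k·c}` when the first `n−p` bits of `k` vanish, and `0`
otherwise.  In particular the squared amplitudes are independent of `c`:
`2^{−p}` if the first `n−p` bits of `k` are zero, and `0` otherwise. -/
theorem hp0_hadamard_on_coset_state (n p : ℕ) (hp : p ≤ n)
    (c : Fin n → Bool) (hc : ∀ i : Fin n, i.val < n - p → c i = false)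
    (k : Fin n → Bool) :
    (∑ y : Fin n → Bool,
        (∏ i : Fin n, Hgate (k i) (y i)) *
          (if ∀ i : Fin n, n - p ≤ i.val → y i = c i
            then ((Real.sqrt (2 ^ (n - p)) : ℂ))⁻¹ else 0))
      = (if ∀ i : Fin n, i.val < n - p → k i = false
          then (Real.sqrt (2 ^ p) : ℂ)⁻¹ *
            (-1 : ℂ) ^ (Finset.univ.filter fun i : Fin n => k i && c i).card
          else 0) ∧
    ‖(∑ y : Fin n → Bool,
        (∏ i : Fin n, Hgate (k i) (y i)) *
          (if ∀ i : Fin n, n - p ≤ i.val → y i = c i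
            then ((Real.sqrt (2 ^ (n - p)) : ℂ))⁻¹ else 0))‖ ^ 2
      = (if ∀ i : Fin n, i.val < n - p → k i = false
          then ((2 : ℝ) ^ p)⁻¹ else 0) :=
  hp0_hadamard_on_coset_state_general n p hp c k
end

section
/- Let Pr(·|r) and Pr(·|r+1) be two probability distributions on a finite set X with Pr(x|r) > 0 for all x, and define the discrete Fisher information DFI(r) = Σ_x (Pr(x|r+1) − Pr(x|r))²/Pr(x|r). Then any unbiased estimator r̂ of the parameter from m i.i.d. samples with standard deviation at most ε satisfies m ≥ ln(1 + ε^{−2}) / ln(1 + DFI(r)) (the Hammersley–Chapman–Robbins bound specialised to unit parameter spacing). -/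
/-- Hammersley–Chapman–Robbins sample-complexity bound at unit parameter
spacing: an estimator from `m` i.i.d. samples that is unbiased at parameters
`r` and `r+1` and has standard deviation at most `ε` under `P = Pr(·|r)`
requires `m ≥ ln(1 + ε⁻²) / ln(1 + DFI(r))`, where
`DFI(r) = Σ_x (Pr(x|r+1) − Pr(x|r))² / Pr(x|r)`. -/
theorem hcr_sample_complexity
    {X : Type*} [Fintype X] (m : ℕ)
    (P Q : X → ℝ) (hP : ∀ x, 0 < P x) (hQ : ∀ x, 0 ≤ Q x)
    (hPs : ∑ x, P x = 1) (hQs : ∑ x, Q x = 1)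
    (r : ℝ) (est : (Fin m → X) → ℝ) (ε : ℝ) (hε : 0 < ε)
    (hunbP : ∑ s : Fin m → X, (∏ i, P (s i)) * est s = r)
    (hunbQ : ∑ s : Fin m → X, (∏ i, Q (s i)) * est s = r + 1)
    (hvar : ∑ s : Fin m → X, (∏ i, P (s i)) * (est s - r) ^ 2 ≤ ε ^ 2) :
    (m : ℝ) ≥ Real.log (1 + ε⁻¹ ^ 2) /
      Real.log (1 + ∑ x, (Q x - P x) ^ 2 / P x) := by
  classical
  set c : ℝ := ∑ x, (Q x - P x) ^ 2 / P x with hc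
  have key : ∀ f : X → ℝ, ∑ s : Fin m → X, ∏ i, f (s i) = (∑ x, f x) ^ m := by
    intro f
    rw [← Fintype.prod_sum (fun (_ : Fin m) (x : X) => f x)]
    simp [Finset.prod_const]
  have hpP : ∀ s : Fin m → X, 0 < ∏ i, P (s i) := fun s =>
    Finset.prod_pos fun i _ => hP (s i)
  -- sums of products are 1
  have hPm : ∑ s : Fin m → X, ∏ i, P (s i) = 1 := by rw [key]; simp [hPs]
  have hQm : ∑ s : Fin m → X, ∏ i, Q (s i) = 1 := by rw [key]; simp [hQs]
  -- chi-squared identity: ∑ Q²/P = 1 + c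
  have hchi : ∑ x, Q x ^ 2 / P x = 1 + c := by
    have : ∀ x : X, Q x ^ 2 / P x = (Q x - P x) ^ 2 / P x + 2 * Q x - P x := by
      intro x
      have h0 := (hP x).ne'
      field_simp
      ring
    rw [Finset.sum_congr rfl fun x _ => this x]
    rw [Finset.sum_sub_distrib, Finset.sum_add_distrib, ← Finset.mul_sum, hQs, hPs, hc]
    ring
  -- the chi-squared of the product distribution
  have hA : ∑ s : Fin m → X, (∏ i, Q (s i) - ∏ i, P (s i)) ^ 2 / ∏ i, P (s i)
      = (1 + c) ^ m - 1 := by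
    have step : ∀ s : Fin m → X,
        ((∏ i, Q (s i)) - ∏ i, P (s i)) ^ 2 / ∏ i, P (s i)
          = (∏ i, Q (s i) ^ 2 / P (s i)) - 2 * ∏ i, Q (s i) + ∏ i, P (s i) := by
      intro s
      have hp := (hpP s).ne'
      have hprod : ∏ i, Q (s i) ^ 2 / P (s i) = (∏ i, Q (s i)) ^ 2 / ∏ i, P (s i) := by
        rw [Finset.prod_div_distrib, Finset.prod_pow]
      rw [hprod]
      field_simp
      ring
    rw [Finset.sum_congr rfl fun s _ => step s]
    rw [Finset.sum_add_distrib, Finset.sum_sub_distrib, ← Finset.mul_sum, hQm, hPm,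
      key (fun x => Q x ^ 2 / P x), hchi]
    ring
  -- covariance identity
  have h1 : (1 : ℝ) = ∑ s : Fin m → X, (∏ i, Q (s i) - ∏ i, P (s i)) * (est s - r) := by
    have : ∑ s : Fin m → X, (∏ i, Q (s i) - ∏ i, P (s i)) * (est s - r)
        = (∑ s : Fin m → X, (∏ i, Q (s i)) * est s)
          - r * (∑ s : Fin m → X, ∏ i, Q (s i))
          - (∑ s : Fin m → X, (∏ i, P (s i)) * est s)
          + r * (∑ s : Fin m → X, ∏ i, P (s i)) := by
      rw [Finset.mul_sum, Finset.mul_sum, ← Finset.sum_sub_distrib, ← Finset.sum_sub_distrib,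
        ← Finset.sum_add_distrib]
      exact Finset.sum_congr rfl fun s _ => by ring
    rw [this, hunbP, hunbQ, hQm, hPm]
    ring
  -- Cauchy–Schwarz
  have hCS : (1 : ℝ) ≤ ((1 + c) ^ m - 1) * ε ^ 2 := by
    have cs := Finset.sum_mul_sq_le_sq_mul_sq Finset.univ
      (fun s : Fin m → X => (∏ i, Q (s i) - ∏ i, P (s i)) / Real.sqrt (∏ i, P (s i)))
      (fun s : Fin m → X => Real.sqrt (∏ i, P (s i)) * (est s - r))
    have e1 : ∀ s : Fin m → X,
        ((∏ i, Q (s i) - ∏ i, P (s i)) / Real.sqrt (∏ i, P (s i)))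
          * (Real.sqrt (∏ i, P (s i)) * (est s - r))
        = (∏ i, Q (s i) - ∏ i, P (s i)) * (est s - r) := by
      intro s
      have hs : Real.sqrt (∏ i, P (s i)) ≠ 0 :=
        (Real.sqrt_pos.mpr (hpP s)).ne'
      field_simp
    have e2 : ∀ s : Fin m → X,
        ((∏ i, Q (s i) - ∏ i, P (s i)) / Real.sqrt (∏ i, P (s i))) ^ 2
        = (∏ i, Q (s i) - ∏ i, P (s i)) ^ 2 / ∏ i, P (s i) := by
      intro s
      rw [div_pow, Real.sq_sqrt (hpP s).le]
    have e3 : ∀ s : Fin m → X,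
        (Real.sqrt (∏ i, P (s i)) * (est s - r)) ^ 2
        = (∏ i, P (s i)) * (est s - r) ^ 2 := by
      intro s
      rw [mul_pow, Real.sq_sqrt (hpP s).le]
    rw [Finset.sum_congr rfl fun s _ => e1 s, Finset.sum_congr rfl fun s _ => e2 s,
      Finset.sum_congr rfl fun s _ => e3 s, ← h1, one_pow, hA] at cs
    have hAnn : (0:ℝ) ≤ (1 + c) ^ m - 1 := by
      rw [← hA]
      exact Finset.sum_nonneg fun s _ => div_nonneg (sq_nonneg _) (hpP s).le
    calc (1:ℝ) ≤ ((1 + c) ^ m - 1) * (∑ s : Fin m → X, (∏ i, P (s i)) * (est s - r) ^ 2) := cs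
      _ ≤ ((1 + c) ^ m - 1) * ε ^ 2 := mul_le_mul_of_nonneg_left hvar hAnn
  have hεinv : (0:ℝ) < ε⁻¹ ^ 2 := by positivity
  have hmain : 1 + ε⁻¹ ^ 2 ≤ (1 + c) ^ m := by
    have hε2 : ε⁻¹ ^ 2 ≤ (1 + c) ^ m - 1 := by
      rw [inv_pow]
      rw [inv_le_iff_one_le_mul₀ (by positivity)]
      linarith [hCS]
    linarith
  have hcpos : 0 < c := by
    by_contra h
    push_neg at h
    have hc0 : c = 0 := le_antisymm h (Finset.sum_nonneg fun x _ =>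
      div_nonneg (sq_nonneg _) (hP x).le)
    rw [hc0] at hmain
    simp at hmain
    nlinarith [hε]
  have hlogc : 0 < Real.log (1 + c) := Real.log_pos (by linarith)
  rw [ge_iff_le, div_le_iff₀ hlogc]
  calc Real.log (1 + ε⁻¹ ^ 2) ≤ Real.log ((1 + c) ^ m) :=
        Real.log_le_log (by positivity) hmain
    _ = m * Real.log (1 + c) := by
        rw [Real.log_pow]
end

section
/- Let S(u) = Σ_{m=0}^{R−1} e^{i(R−1−2m)u} for a positive integer R. Then the squared derivative admits the exact cosine expansion [S'(u)]² = A_0 + 2Σ_{j=1}^{R−1} A_j cos(2ju), where A_j = (R−j)(R²−2Rj−2j²−1)/3. -/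
open Finset

/-- coefficient `n - 2m` (with `n = R - 1`). -/
private def cc (n m : ℕ) : ℝ := (n : ℝ) - 2 * m

private lemma sum_id_real (n : ℕ) : ∑ m ∈ range n, (m : ℝ) = n * (n - 1) / 2 := by
  induction n with
  | zero => simp
  | succ k ih => rw [Finset.sum_range_succ, ih]; push_cast; ring

private lemma sum_sq_real (n : ℕ) :
    ∑ m ∈ range n, (m : ℝ) ^ 2 = n * (n - 1) * (2 * n - 1) / 6 := by
  induction n with
  | zero => simp
  | succ k ih => rw [Finset.sum_range_succ, ih]; push_cast; ring

private lemma key_inner (n s : ℕ) :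
    ∑ m ∈ range (s + 1), cc n m * cc n (s - m)
      = ((s : ℝ) + 1) * ((n : ℝ) * ((n : ℝ) - 2 * s) + 2 * (s : ℝ) ^ 2
          - 2 * s * (2 * s + 1) / 3) := by
  have h : ∀ m ∈ range (s + 1), cc n m * cc n (s - m)
      = ((n : ℝ) * ((n : ℝ) - 2 * s)) + (4 * s) * (m : ℝ) - 4 * (m : ℝ) ^ 2 := by
    intro m hm
    have hms : m ≤ s := by simpa [Nat.lt_succ_iff] using hm
    unfold cc
    rw [Nat.cast_sub hms]
    ring
  rw [Finset.sum_congr rfl h, Finset.sum_sub_distrib, Finset.sum_add_distrib,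
    Finset.sum_const, ← Finset.mul_sum, ← Finset.mul_sum, sum_id_real, sum_sq_real,
    Finset.card_range]
  push_cast
  ring

/-- fiber coefficient -/
private def Bc (n s : ℕ) : ℝ :=
  ∑ p ∈ (range (n + 1) ×ˢ range (n + 1)).filter (fun p => p.1 + p.2 = s),
    cc n p.1 * cc n p.2

private lemma Bc_symm (n j : ℕ) (hj : j ≤ n) : Bc n (n + j) = Bc n (n - j) := by
  unfold Bc
  refine Finset.sum_nbij' (fun p => (n - p.1, n - p.2)) (fun p => (n - p.1, n - p.2))
    ?_ ?_ ?_ ?_ ?_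
  · intro p hp
    simp only [Finset.mem_filter, Finset.mem_product, Finset.mem_range] at hp ⊢
    omega
  · intro p hp
    simp only [Finset.mem_filter, Finset.mem_product, Finset.mem_range] at hp ⊢
    omega
  · intro p hp
    simp only [Finset.mem_filter, Finset.mem_product, Finset.mem_range] at hp
    ext <;> simp <;> omega
  · intro p hp
    simp only [Finset.mem_filter, Finset.mem_product, Finset.mem_range] at hp
    ext <;> simp <;> omega
  · intro p hp
    simp only [Finset.mem_filter, Finset.mem_product, Finset.mem_range] at hp
    have h1 : p.1 ≤ n := by omega
    have h2 : p.2 ≤ n := by omega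
    have e1 : cc n (n - p.1) = -(cc n p.1) := by
      unfold cc; rw [Nat.cast_sub h1]; ring
    have e2 : cc n (n - p.2) = -(cc n p.2) := by
      unfold cc; rw [Nat.cast_sub h2]; ring
    simp [e1, e2]
  
private lemma Bc_eq (n s : ℕ) (hs : s ≤ n) :
    Bc n s = ((s : ℝ) + 1) * ((n : ℝ) * ((n : ℝ) - 2 * s) + 2 * (s : ℝ) ^ 2
          - 2 * s * (2 * s + 1) / 3) := by
  rw [← key_inner]
  unfold Bc
  refine Finset.sum_nbij' (fun p => p.1) (fun m => (m, s - m)) ?_ ?_ ?_ ?_ ?_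
  · intro p hp
    simp only [Finset.mem_filter, Finset.mem_product, Finset.mem_range] at hp ⊢
    omega
  · intro m hm
    simp only [Finset.mem_filter, Finset.mem_product, Finset.mem_range] at hm ⊢
    omega
  · intro p hp
    simp only [Finset.mem_filter, Finset.mem_product, Finset.mem_range] at hp
    ext <;> simp <;> omega
  · intro m hm
    rfl
  · intro p hp
    simp only [Finset.mem_filter, Finset.mem_product, Finset.mem_range] at hp
    have : p.2 = s - p.1 := by omega
    rw [this]

private lemma range_symm_sum {M : Type*} [AddCommMonoid M] (g : ℕ → M) (n : ℕ) :
    ∑ s ∈ range (2 * n + 1), g s = g n + ∑ j ∈ Icc 1 n, (g (n - j) + g (n + j)) := by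
  have h2n : 2 * n + 1 = (n + 1) + n := by omega
  rw [h2n, Finset.sum_range_add, Finset.sum_add_distrib, ← add_assoc]
  have hIcc : (Icc 1 n : Finset ℕ) = Ico 1 (n + 1) := by
    rw [Finset.Ico_add_one_right_eq_Icc]
  congr 1
  · -- ∑ s ∈ range (n+1), g s = g n + ∑ j ∈ Icc 1 n, g (n - j)
    rw [← Finset.sum_range_reflect g (n + 1), Finset.sum_range_succ', hIcc,
      Finset.sum_Ico_eq_sum_range]
    simp only [Nat.add_sub_cancel, Nat.sub_zero]
    rw [add_comm]
    congr 1
    exact Finset.sum_congr rfl fun i _ => by congr 1; omega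
  · rw [hIcc, Finset.sum_Ico_eq_sum_range]
    simp only [Nat.add_sub_cancel]
    exact Finset.sum_congr rfl fun i _ => by congr 1; omega

/-- Exact cosine expansion of the squared derivative of the Dirichlet kernel
`S(u) = Σ_{m=0}^{R−1} e^{i(R−1−2m)u}`:
`[S'(u)]² = A_0 + 2 Σ_{j=1}^{R−1} A_j cos(2ju)` with
`A_j = (R−j)(R²−2Rj−2j²−1)/3`. -/
theorem dirichlet_kernel_deriv_sq_cosine_expansion (R : ℕ) (hR : 0 < R) (u : ℝ) :
    (Complex.I * ∑ m ∈ Finset.range R,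
        (((R : ℝ) - 1 - 2 * m : ℝ) : ℂ) *
          Complex.exp (Complex.I * (((R : ℝ) - 1 - 2 * m) * u : ℝ))) ^ 2
      = (((R : ℝ) * ((R : ℝ) ^ 2 - 1) / 3 : ℝ) : ℂ) +
        2 * ∑ j ∈ Finset.Icc 1 (R - 1),
          ((((R : ℝ) - j) * ((R : ℝ) ^ 2 - 2 * R * j - 2 * (j : ℝ) ^ 2 - 1) / 3 : ℝ) : ℂ) *
            (Real.cos (2 * j * u) : ℂ) := by
  obtain ⟨n, rfl⟩ : ∃ n, R = n + 1 := ⟨R - 1, by omega⟩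
  simp only [Nat.add_sub_cancel]
  set z : ℂ := Complex.exp (Complex.I * u) with hz_def
  have hz : z ≠ 0 := Complex.exp_ne_zero _
  have hzpow : ∀ k : ℤ, z ^ k = Complex.exp ((k : ℂ) * (Complex.I * u)) := by
    intro k; rw [Complex.exp_int_mul]
  -- rewrite the inner sum
  have hterm : ∀ m ∈ range (n + 1),
      (((↑(n + 1) : ℝ) - 1 - 2 * m : ℝ) : ℂ) *
          Complex.exp (Complex.I * (((↑(n + 1) : ℝ) - 1 - 2 * m) * u : ℝ))
        = ((cc n m : ℝ) : ℂ) * z ^ ((n : ℤ) - 2 * m) := by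
    intro m _
    rw [hzpow]
    congr 1
    · unfold cc; push_cast; ring
    · congr 1; push_cast; ring
  rw [Finset.sum_congr rfl hterm]
  -- expand the square into fibers
  have hsq : (∑ m ∈ range (n + 1), ((cc n m : ℝ) : ℂ) * z ^ ((n : ℤ) - 2 * m)) ^ 2
      = ∑ s ∈ range (2 * n + 1), ((Bc n s : ℝ) : ℂ) * z ^ ((2 * n : ℤ) - 2 * s) := by
    rw [sq, Finset.sum_mul_sum, ← Finset.sum_product']
    rw [← Finset.sum_fiberwise_of_maps_to (g := fun p : ℕ × ℕ => p.1 + p.2)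
      (t := range (2 * n + 1)) (fun p hp => by
        simp only [Finset.mem_product, Finset.mem_range] at hp ⊢; omega)]
    refine Finset.sum_congr rfl fun s _ => ?_
    have hinner : ∀ p ∈ (range (n + 1) ×ˢ range (n + 1)).filter
        (fun p : ℕ × ℕ => p.1 + p.2 = s),
        (((cc n p.1 : ℝ) : ℂ) * z ^ ((n : ℤ) - 2 * p.1)) *
          (((cc n p.2 : ℝ) : ℂ) * z ^ ((n : ℤ) - 2 * p.2))
        = ((cc n p.1 * cc n p.2 : ℝ) : ℂ) * z ^ ((2 * n : ℤ) - 2 * s) := by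
      intro p hp
      simp only [Finset.mem_filter, Finset.mem_product, Finset.mem_range] at hp
      rw [← hp.2]
      rw [mul_mul_mul_comm, ← zpow_add₀ hz]
      push_cast
      ring_nf
    rw [Finset.sum_congr rfl hinner, ← Finset.sum_mul, ← Complex.ofReal_sum]
    rfl
  rw [mul_pow, Complex.I_sq, hsq, range_symm_sum
    (fun s => ((Bc n s : ℝ) : ℂ) * z ^ ((2 * n : ℤ) - 2 * s)) n]
  -- cosine identity
  have hcos : ∀ j : ℕ, z ^ ((2 * j : ℤ)) + z ^ (-(2 * j : ℤ))
      = 2 * ((Real.cos (2 * j * u) : ℝ) : ℂ) := by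
    intro j
    rw [Complex.ofReal_cos, Complex.two_cos, hzpow, hzpow]
    congr 1 <;> (congr 1 ; push_cast ; ring)
  have hmain : ∀ j ∈ Icc 1 n,
      (((Bc n (n - j) : ℝ) : ℂ) * z ^ ((2 * n : ℤ) - 2 * ((n - j : ℕ) : ℤ))
        + ((Bc n (n + j) : ℝ) : ℂ) * z ^ ((2 * n : ℤ) - 2 * ((n + j : ℕ) : ℤ)))
      = ((Bc n (n - j) : ℝ) : ℂ) * (2 * ((Real.cos (2 * j * u) : ℝ) : ℂ)) := by
    intro j hj
    simp only [Finset.mem_Icc] at hj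
    rw [Bc_symm n j hj.2, ← hcos j]
    have e1 : (2 * n : ℤ) - 2 * ((n - j : ℕ) : ℤ) = (2 * j : ℤ) := by
      have : ((n - j : ℕ) : ℤ) = (n : ℤ) - j := by omega
      rw [this]; ring
    have e2 : (2 * n : ℤ) - 2 * ((n + j : ℕ) : ℤ) = -(2 * j : ℤ) := by
      push_cast; ring
    rw [e1, e2]
    ring
  rw [Finset.sum_congr rfl hmain]
  have hz0 : z ^ ((2 * n : ℤ) - 2 * (n : ℤ)) = 1 := by
    rw [sub_self, zpow_zero]
  rw [hz0]
  -- evaluate the coefficients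
  have hB0 : Bc n n = -((↑(n + 1) : ℝ) * ((↑(n + 1) : ℝ) ^ 2 - 1) / 3) := by
    rw [Bc_eq n n le_rfl]; push_cast; ring
  have hsum2 : ∑ j ∈ Icc 1 n, ((Bc n (n - j) : ℝ) : ℂ) * (2 * ((Real.cos (2 * j * u) : ℝ) : ℂ))
      = -(2 * ∑ j ∈ Icc 1 n,
          ((((↑(n + 1) : ℝ) - j) * ((↑(n + 1) : ℝ) ^ 2 - 2 * (↑(n + 1) : ℝ) * j
              - 2 * (j : ℝ) ^ 2 - 1) / 3 : ℝ) : ℂ) *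
            ((Real.cos (2 * j * u) : ℝ) : ℂ)) := by
    rw [Finset.mul_sum, ← Finset.sum_neg_distrib]
    refine Finset.sum_congr rfl fun j hj => ?_
    simp only [Finset.mem_Icc] at hj
    have hcast : ((n - j : ℕ) : ℝ) = (n : ℝ) - j := by
      push_cast [Nat.cast_sub hj.2]; ring
    rw [Bc_eq n (n - j) (by omega), hcast]
    push_cast
    ring
  rw [hsum2, hB0]
  push_cast
  ring
end

section
/- Let U be a unitary on (ℂ²)^{⊗n} whose matrix entries in the computational basis have the form ⟨x|U|y⟩ = 2^{−n/2} exp(i Σ_{j,k} θ̃_{jk} x_j y_k) for some real matrix θ̃ (bilinear phase in the bits of x and y). Identify ℤ_{2^n} with n-bit strings; let V = {q·2^s : 0 ≤ q < 2^{n−s}} and let c ∈ ℤ_{2^n} satisfy 0 ≤ c < 2^s. Then for every x, |⟨x|U|c+V⟩|² = |⟨x|U|V⟩|², i.e. the measurement probabilities are independent of the coset shift c. -/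
/-!
XOR with `c` maps the strings vanishing on the last `s` bits bijectively onto those agreeing
with `c` there. For such a string `y` the supports of `y` and `c` are disjoint, so
`bit (y ⊕ c) = bit y + bit c`, and the bilinear phase splits as `φ(x, y ⊕ c) = φ(x, c) + φ(x, y)`.
The two amplitudes therefore differ by the unimodular factor `exp (i φ(x, c))`.
-/

def bitC (b : Bool) : ℂ := if b then 1 else 0

theorem norm_sum_mul_ite_eq_of_equiv {α : Type*} [Fintype α] (e : α ≃ α)
    (S T : α → Prop) [DecidablePred S] [DecidablePred T] (hST : ∀ y, T (e y) ↔ S y)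
    (f : α → ℂ) (z : ℂ) (hz : ‖z‖ = 1) (hf : ∀ y, S y → f (e y) = z * f y) (a : ℂ) :
    ‖∑ y, f y * (if T y then a else 0)‖ = ‖∑ y, f y * (if S y then a else 0)‖ := by
  have hsum : ∑ y, f y * (if T y then a else 0) = z * ∑ y, f y * (if S y then a else 0) := by
    rw [← e.sum_comp, Finset.mul_sum]
    refine Finset.sum_congr rfl fun y _ => ?_
    by_cases hy : S y
    · rw [if_pos ((hST y).2 hy), if_pos hy, hf y hy, mul_assoc]
    · rw [if_neg (mt (hST y).1 hy), if_neg hy, mul_zero, mul_zero, mul_zero]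
  rw [hsum, norm_mul, hz, one_mul]

theorem bitC_xor_of_disjoint {a b : Bool} (h : a = false ∨ b = false) :
    bitC (xor a b) = bitC a + bitC b := by
  revert h; cases a <;> cases b <;> simp [bitC]

theorem bitC_im (b : Bool) : (bitC b).im = 0 := by
  cases b <;> simp [bitC]

section
variable {ι : Type*} [Fintype ι]

def bitPhase (θ : ι → ι → ℝ) (x y : ι → Bool) : ℂ :=
  ∑ j, ∑ k, (θ j k : ℂ) * bitC (x j) * bitC (y k)

theorem bitPhase_im (θ : ι → ι → ℝ) (x y : ι → Bool) : (bitPhase θ x y).im = 0 := by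
  simp [bitPhase, Complex.im_sum, Complex.mul_im, bitC_im]

theorem norm_exp_I_mul_bitPhase (θ : ι → ι → ℝ) (x y : ι → Bool) :
    ‖Complex.exp (Complex.I * bitPhase θ x y)‖ = 1 := by
  rw [Complex.norm_exp]; simp [bitPhase_im]

theorem bitPhase_xor_of_disjoint (θ : ι → ι → ℝ) (x : ι → Bool) {y c : ι → Bool}
    (h : ∀ k, y k = false ∨ c k = false) :
    bitPhase θ x (fun k => xor (y k) (c k)) = bitPhase θ x c + bitPhase θ x y := by
  simp only [bitPhase, ← Finset.sum_add_distrib, bitC_xor_of_disjoint (h _)]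
  exact Finset.sum_congr rfl fun j _ => Finset.sum_congr rfl fun k _ => by ring

end

theorem bilinear_phase_shift_invariance_general (n s : ℕ)
    (θ : Fin n → Fin n → ℝ)
    (c : Fin n → Bool) (hc : ∀ i : Fin n, i.val < n - s → c i = false)
    (x : Fin n → Bool) :
    ‖(∑ y : Fin n → Bool,
        ((Real.sqrt (2 ^ n) : ℂ)⁻¹ *
          Complex.exp (Complex.I * ∑ j : Fin n, ∑ k : Fin n,
            ((θ j k : ℝ) : ℂ) * bitC (x j) * bitC (y k))) *
        (if ∀ i : Fin n, n - s ≤ i.val → y i = c i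
          then ((Real.sqrt (2 ^ (n - s)) : ℂ))⁻¹ else 0))‖ ^ 2
      =
    ‖(∑ y : Fin n → Bool,
        ((Real.sqrt (2 ^ n) : ℂ)⁻¹ *
          Complex.exp (Complex.I * ∑ j : Fin n, ∑ k : Fin n,
            ((θ j k : ℝ) : ℂ) * bitC (x j) * bitC (y k))) *
        (if ∀ i : Fin n, n - s ≤ i.val → y i = false
          then ((Real.sqrt (2 ^ (n - s)) : ℂ))⁻¹ else 0))‖ ^ 2 := by
  have hxor : Function.Involutive fun (y : Fin n → Bool) k => xor (y k) (c k) := by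
    intro y; funext k; simp
  congr 1
  refine norm_sum_mul_ite_eq_of_equiv hxor.toPerm _ _ (fun y => ?_)
    (fun y => _ * Complex.exp (Complex.I * bitPhase θ x y)) _
    (norm_exp_I_mul_bitPhase θ x c) (fun y hy => ?_) _
  · simp only [Function.Involutive.coe_toPerm]
    refine forall₂_congr fun i _ => ?_
    cases y i <;> cases c i <;> decide
  · have hdisj : ∀ k, y k = false ∨ c k = false := fun k =>
      if hk : n - s ≤ k.val then .inl (hy k hk) else .inr (hc k (not_le.1 hk))
    simp only [Function.Involutive.coe_toPerm, bitPhase_xor_of_disjoint θ x hdisj,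
      Complex.exp_add, mul_add]
    ring

/-- Shift invariance for unitaries with flat bilinear-phase entries
`⟨x|U|y⟩ = 2^{−n/2} exp(i Σ_{j,k} θ̃_{jk} x_j y_k)`.  Identifying `ℤ_{2^n}`
with `n`-bit strings (MSB first), let `V = {q·2^s : 0 ≤ q < 2^{n−s}}`, whose
elements are bitstrings with last `s` bits zero, and let `c` be a shift
`0 ≤ c < 2^s`, a bitstring whose first `n−s` bits are zero (so `c + v` just
sets the last `s` bits).  Then for every outcome `x`,
`|⟨x|U|c+V⟩|² = |⟨x|U|V⟩|²`. -/
theorem bilinear_phase_shift_invariance (n s : ℕ) (hs : s ≤ n)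
    (θ : Fin n → Fin n → ℝ)
    (c : Fin n → Bool) (hc : ∀ i : Fin n, i.val < n - s → c i = false)
    (x : Fin n → Bool) :
    ‖(∑ y : Fin n → Bool,
        ((Real.sqrt (2 ^ n) : ℂ)⁻¹ *
          Complex.exp (Complex.I * ∑ j : Fin n, ∑ k : Fin n,
            ((θ j k : ℝ) : ℂ) * bitC (x j) * bitC (y k))) *
        (if ∀ i : Fin n, n - s ≤ i.val → y i = c i
          then ((Real.sqrt (2 ^ (n - s)) : ℂ))⁻¹ else 0))‖ ^ 2
      =
    ‖(∑ y : Fin n → Bool,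
        ((Real.sqrt (2 ^ n) : ℂ)⁻¹ *
          Complex.exp (Complex.I * ∑ j : Fin n, ∑ k : Fin n,
            ((θ j k : ℝ) : ℂ) * bitC (x j) * bitC (y k))) *
        (if ∀ i : Fin n, n - s ≤ i.val → y i = false
          then ((Real.sqrt (2 ^ (n - s)) : ℂ))⁻¹ else 0))‖ ^ 2 :=
  bilinear_phase_shift_invariance_general n s θ c hc x
end
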